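/- arXiv:2001.11178 — 4 statements merged into one kernel-verified Lean document; each statement's English description precedes it below -/
import Mathlib

section
/- Let $T \subseteq \mathbb{Z}_{\geq 1}$ be such that there exists $p_0 \in \mathbb{Z}_{\geq 1}$ with the property: for every prime $p \geq p_0$ there exists $m_p \in \mathbb{Z}_{\geq 1}$ such that every multiple $pm$ with $m \geq m_p$ lies in $T$. Then $\lim_{m \to \infty} \#(T \cap [1,m])/m = 1$. -/
/-!
Fix `ε > 0`. Since `∑ 1/p` diverges over the primes `p ≥ p₀`, there is a finite set `P` of such
primes with `∏_{p ∈ P} (1 - 1/p) < ε`. Put `Q = ∏_{p ∈ P} p`. An integer `n ∉ T` divisible by some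
`p ∈ P` is smaller than `p · m_p`, so apart from boundedly many exceptions the elements of
`[1, N] \ T` are coprime to `Q`; there are at most `φ(Q) (N / Q + 1) ≤ ε N + φ(Q)` of these.
Hence the complement of `T` has density `0`.
-/

open Finset Filter Topology
open scoped Nat

theorem Real.prod_one_sub_le_exp_neg_sum {ι : Type*} (s : Finset ι) {x : ι → ℝ}
    (hx : ∀ i ∈ s, x i ≤ 1) : ∏ i ∈ s, (1 - x i) ≤ Real.exp (-∑ i ∈ s, x i) := by
  rw [← sum_neg_distrib, Real.exp_sum]
  exact prod_le_prod (fun i hi => sub_nonneg.2 (hx i hi)) fun i _ => Real.one_sub_le_exp_neg _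

theorem not_summable_inv_primes_ge (p₀ : ℕ) :
    ¬ Summable ({p | p.Prime ∧ p₀ ≤ p}.indicator fun n : ℕ => (n : ℝ)⁻¹) := by
  intro h
  apply not_summable_one_div_on_primes
  rw [← summable_nat_add_iff p₀]
  refine ((summable_nat_add_iff p₀).2 h).congr fun n => ?_
  simp [Set.indicator_apply]

theorem exists_primes_ge_sum_inv_gt (p₀ : ℕ) (K : ℝ) :
    ∃ P : Finset ℕ, (∀ p ∈ P, p.Prime ∧ p₀ ≤ p) ∧ K < ∑ p ∈ P, (p : ℝ)⁻¹ := by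
  classical
  obtain ⟨u, hu⟩ : ∃ u : Finset ℕ,
      K < ∑ n ∈ u, {p | p.Prime ∧ p₀ ≤ p}.indicator (fun n : ℕ => (n : ℝ)⁻¹) n := by
    by_contra! hle
    exact not_summable_inv_primes_ge p₀ <|
      summable_of_sum_le (fun n => Set.indicator_nonneg (fun _ _ => by positivity) n) hle
  refine ⟨{p ∈ u | p.Prime ∧ p₀ ≤ p}, fun p hp => (mem_filter.1 hp).2, ?_⟩
  simpa only [sum_filter, Set.indicator_apply, Set.mem_ofPred_eq] using hu

theorem exists_primes_ge_prod_one_sub_inv_lt (p₀ : ℕ) {ε : ℝ} (hε : 0 < ε) :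
    ∃ P : Finset ℕ, (∀ p ∈ P, p.Prime ∧ p₀ ≤ p) ∧ ∏ p ∈ P, (1 - (p : ℝ)⁻¹) < ε := by
  obtain ⟨P, hP, hsum⟩ := exists_primes_ge_sum_inv_gt p₀ (-Real.log ε)
  refine ⟨P, hP, ?_⟩
  calc ∏ p ∈ P, (1 - (p : ℝ)⁻¹) ≤ Real.exp (-∑ p ∈ P, (p : ℝ)⁻¹) :=
        Real.prod_one_sub_le_exp_neg_sum P fun p hp =>
          inv_le_one_of_one_le₀ <| mod_cast (hP p hp).1.one_le
    _ < Real.exp (Real.log ε) := Real.exp_lt_exp.2 (by linarith)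
    _ = ε := Real.exp_log hε

theorem Nat.totient_prod_primes {P : Finset ℕ} (hP : ∀ p ∈ P, p.Prime) :
    (φ (∏ p ∈ P, p) : ℝ) = (∏ p ∈ P, p : ℕ) * ∏ p ∈ P, (1 - (p : ℝ)⁻¹) := by
  have := congrArg (Rat.cast : ℚ → ℝ) (Nat.totient_eq_mul_prod_factors (∏ p ∈ P, p))
  rw [Nat.primeFactors_prod hP] at this
  push_cast at this ⊢
  exact this

theorem lt_mul_of_dvd_of_notMem {T : Set ℕ} {p M n : ℕ} (hp : 0 < p)
    (hM : ∀ k, M ≤ k → p * k ∈ T) (hpn : p ∣ n) (hn : n ∉ T) : n < p * M := by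
  obtain ⟨k, rfl⟩ := hpn
  exact Nat.mul_lt_mul_of_pos_left (not_le.1 fun hk => hn (hM k hk)) hp

theorem lt_sum_of_notMem_of_not_coprime {T : Set ℕ} {P : Finset ℕ} (hP : ∀ p ∈ P, p.Prime)
    {M : ℕ → ℕ} (hM : ∀ p ∈ P, ∀ k, M p ≤ k → p * k ∈ T) {n : ℕ} (hn : n ∉ T)
    (hcop : ¬ (∏ p ∈ P, p).Coprime n) : n < ∑ p ∈ P, p * M p := by
  obtain ⟨p, hpP, hpn⟩ := not_forall₂.1 (Nat.coprime_prod_left_iff.not.1 hcop)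
  calc n < p * M p := lt_mul_of_dvd_of_notMem (hP p hpP).pos (hM p hpP)
        ((Nat.Prime.dvd_iff_not_coprime (hP p hpP)).2 hpn) hn
    _ ≤ ∑ p ∈ P, p * M p := single_le_sum (f := fun p => p * M p) (fun _ _ => Nat.zero_le _) hpP

theorem ncard_compl_inter_Icc_le {T : Set ℕ} {P : Finset ℕ} (hP : ∀ p ∈ P, p.Prime)
    {M : ℕ → ℕ} (hM : ∀ p ∈ P, ∀ k, M p ≤ k → p * k ∈ T) (N : ℕ) :
    (Tᶜ ∩ Set.Icc 1 N).ncard ≤ φ (∏ p ∈ P, p) * (N / ∏ p ∈ P, p + 1) + ∑ p ∈ P, p * M p := by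
  classical
  set Q := ∏ p ∈ P, p
  set C := ∑ p ∈ P, p * M p
  have hsub : Tᶜ ∩ Set.Icc 1 N ⊆ ↑({n ∈ Ico 1 (1 + N) | Q.Coprime n} ∪ range C) := by
    rintro n ⟨hn, hnN⟩
    by_cases hcop : Q.Coprime n
    · simp only [coe_union, coe_filter, coe_range, Set.mem_union, Set.mem_ofPred_eq, mem_Ico]
      exact Or.inl ⟨⟨hnN.1, by linarith [hnN.2]⟩, hcop⟩
    · simpa using Or.inr (lt_sum_of_notMem_of_not_coprime hP hM hn hcop)
  calc (Tᶜ ∩ Set.Icc 1 N).ncard ≤ #({n ∈ Ico 1 (1 + N) | Q.Coprime n} ∪ range C) := by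
        rw [← Set.ncard_coe_finset]; exact Set.ncard_le_ncard hsub
    _ ≤ #{n ∈ Ico 1 (1 + N) | Q.Coprime n} + #(range C) := card_union_le _ _
    _ ≤ φ Q * (N / Q + 1) + C := by
        rw [card_range]
        gcongr
        exact Nat.Ico_filter_coprime_le 1 N (prod_pos fun p hp => (hP p hp).pos).ne'

theorem ncard_compl_inter_Icc_le_mul_add {T : Set ℕ} {P : Finset ℕ} (hP : ∀ p ∈ P, p.Prime)
    {M : ℕ → ℕ} (hM : ∀ p ∈ P, ∀ k, M p ≤ k → p * k ∈ T) (N : ℕ) :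
    ((Tᶜ ∩ Set.Icc 1 N).ncard : ℝ) ≤
      (∏ p ∈ P, (1 - (p : ℝ)⁻¹)) * N + (φ (∏ p ∈ P, p) + ∑ p ∈ P, p * M p : ℕ) := by
  set Q := ∏ p ∈ P, p
  have hQ : (0 : ℝ) < Q := mod_cast prod_pos fun p hp => (hP p hp).pos
  calc ((Tᶜ ∩ Set.Icc 1 N).ncard : ℝ) ≤ (φ Q * (N / Q + 1) + ∑ p ∈ P, p * M p : ℕ) :=
        mod_cast ncard_compl_inter_Icc_le hP hM N
    _ ≤ φ Q * ((N : ℝ) / Q + 1) + (∑ p ∈ P, p * M p : ℕ) := by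
        push_cast
        gcongr
        exact Nat.cast_div_le
    _ = φ Q * ((N : ℝ) / Q) + (φ Q + ∑ p ∈ P, p * M p : ℕ) := by push_cast; ring
    _ = (∏ p ∈ P, (1 - (p : ℝ)⁻¹)) * N + (φ Q + ∑ p ∈ P, p * M p : ℕ) := by
        rw [Nat.totient_prod_primes hP]
        field_simp
        ring

theorem tendsto_div_natCast_zero_of_le_mul_add {f : ℕ → ℝ} (hf : 0 ≤ f)
    (h : ∀ ε > 0, ∃ D, ∀ N, f N ≤ ε * N + D) : Tendsto (fun N => f N / N) atTop (𝓝 0) := by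
  refine tendsto_order.2 ⟨fun a ha => Eventually.of_forall fun N => ha.trans_le ?_, fun a ha => ?_⟩
  · exact div_nonneg (hf N) N.cast_nonneg
  obtain ⟨D, hD⟩ := h (a / 2) (half_pos ha)
  filter_upwards [(tendsto_const_div_atTop_nhds_zero_nat D).eventually (gt_mem_nhds (half_pos ha)),
    eventually_gt_atTop 0] with N hDN hN
  have hN' : (0 : ℝ) < N := mod_cast hN
  calc f N / N ≤ (a / 2 * N + D) / N := by gcongr; exact hD N
    _ = a / 2 + D / N := by field_simp
    _ < a := by linarith

theorem ncard_inter_Icc_add_ncard_compl_inter_Icc (T : Set ℕ) (N : ℕ) :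
    (T ∩ Set.Icc 1 N).ncard + (Tᶜ ∩ Set.Icc 1 N).ncard = N := by
  rw [Set.inter_comm, Set.inter_comm Tᶜ, ← Set.sdiff_eq,
    Set.ncard_inter_add_ncard_sdiff_eq_ncard _ _ (Set.finite_Icc 1 N), Set.ncard_Icc_nat,
    Nat.add_sub_cancel]

theorem density_one_of_multiples_in_T_general
    (T : Set ℕ)
    (h : ∃ p₀ : ℕ, 1 ≤ p₀ ∧ ∀ p : ℕ, p.Prime → p₀ ≤ p →
      ∃ m_p : ℕ, 1 ≤ m_p ∧ ∀ m : ℕ, m_p ≤ m → p * m ∈ T) :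
    Tendsto (fun m : ℕ => ((T ∩ Set.Icc 1 m).ncard : ℝ) / m) atTop (nhds 1) := by
  obtain ⟨p₀, -, hT⟩ := h
  have hsparse : Tendsto (fun N : ℕ => ((Tᶜ ∩ Set.Icc 1 N).ncard : ℝ) / N) atTop (𝓝 0) := by
    refine tendsto_div_natCast_zero_of_le_mul_add (fun N => Nat.cast_nonneg _) fun ε hε => ?_
    obtain ⟨P, hP, hPε⟩ := exists_primes_ge_prod_one_sub_inv_lt p₀ hε
    choose! M _ hM using fun p hp => hT p (hP p hp).1 (hP p hp).2
    exact ⟨_, fun N => (ncard_compl_inter_Icc_le_mul_add (fun p hp => (hP p hp).1) hM N).trans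
      (by gcongr)⟩
  have hdense := (tendsto_const_nhds (x := (1 : ℝ))).sub hsparse
  rw [sub_zero] at hdense
  refine hdense.congr' ?_
  filter_upwards [eventually_gt_atTop 0] with N hN
  have hN' : (N : ℝ) ≠ 0 := mod_cast hN.ne'
  rw [eq_div_iff hN', sub_mul, div_mul_cancel₀ _ hN', one_mul, sub_eq_iff_eq_add,
    ← Nat.cast_add, ncard_inter_Icc_add_ncard_compl_inter_Icc]

theorem density_one_of_multiples_in_T
    (T : Set ℕ) (hT : ∀ n ∈ T, 1 ≤ n)
    (h : ∃ p₀ : ℕ, 1 ≤ p₀ ∧ ∀ p : ℕ, p.Prime → p₀ ≤ p →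
      ∃ m_p : ℕ, 1 ≤ m_p ∧ ∀ m : ℕ, m_p ≤ m → p * m ∈ T) :
    Tendsto (fun m : ℕ => ((T ∩ Set.Icc 1 m).ncard : ℝ) / m) atTop (nhds 1) :=
  density_one_of_multiples_in_T_general T h
end

section
/- Let $K$ be a field with a proper adelic structure $S$ satisfying Northcott's property, and let $h_S$ denote the associated height on projective space. If $(a_0 : \cdots : a_n) \in \mathbb{P}^n(K)$ satisfies $h_S(a_0 : \cdots : a_n) = 0$, then there exists $\lambda \in K^\times$ such that for each $i$, $\lambda a_i$ is either $0$ or a root of unity in $K$. -/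
open MeasureTheory

/-- A (proper) adelic structure on a field `K`: a measure space `Ω`, a family of
absolute values of `K` indexed by `Ω`, such that `ω ↦ log |a|_ω` is integrable for
every `a ∈ K^×`, and the product formula `∫ log |a|_ω dν = 0` holds. -/
structure ProperAdelicStructure (K : Type) [Field K] (Ω : Type) [MeasurableSpace Ω] where
  ν : Measure Ω
  absv : Ω → AbsoluteValue K ℝ
  integrable_log : ∀ a : K, a ≠ 0 → Integrable (fun ω => Real.log (absv ω a)) ν
  product_formula : ∀ a : K, a ≠ 0 → ∫ ω, Real.log (absv ω a) ∂ν = 0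

/-- The height of a tuple of elements of `K` with respect to an adelic structure. -/
noncomputable def ProperAdelicStructure.height {K Ω : Type} [Field K] [MeasurableSpace Ω]
    (S : ProperAdelicStructure K Ω) {m : ℕ} (x : Fin m → K) : ℝ :=
  ∫ ω, Real.log (⨆ i, S.absv ω (x i)) ∂S.ν

/-- Northcott's property: sets of elements of `K` of bounded height are finite. -/
def ProperAdelicStructure.Northcott {K Ω : Type} [Field K] [MeasurableSpace Ω]
    (S : ProperAdelicStructure K Ω) : Prop :=
  ∀ C : ℝ, {a : K | ∫ ω, Real.log (max (S.absv ω a) 1) ∂S.ν ≤ C}.Finite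

/-- `x` is zero or a root of unity. -/
def IsZeroOrRootOfUnity {K : Type} [Field K] (x : K) : Prop :=
  x = 0 ∨ ∃ k : ℕ, 0 < k ∧ x ^ k = 1

/-!
Normalize `a` so that a nonzero coordinate becomes `1`. Each normalized coordinate `b` then has
`∫ log max(|b|_ω, 1) ≤ h_S(a) = 0`, because `max(|b|_ω, 1)` is bounded by the largest normalized
coordinate and the product formula removes the normalizing factor. This bound is inherited by every
power `b ^ k`, since `log max(|b ^ k|, 1) = k log max(|b|, 1)`, so by Northcott the powers of `b`
form a finite set, and `b` is zero or a root of unity.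
-/

open Real

theorem isZeroOrRootOfUnity_of_forall_pow_mem {K : Type} [Field K] {b : K} {t : Set K}
    (ht : t.Finite) (hb : ∀ n : ℕ, b ^ n ∈ t) : IsZeroOrRootOfUnity b := by
  refine or_iff_not_imp_left.2 fun hb0 => ?_
  obtain ⟨m, n, hmn, hpow⟩ := ht.exists_lt_map_eq_of_forall_mem hb
  refine ⟨n - m, Nat.sub_pos_of_lt hmn, mul_left_cancel₀ (pow_ne_zero m hb0) ?_⟩
  rw [← pow_add, Nat.add_sub_cancel' hmn.le, ← hpow, mul_one]

theorem AbsoluteValue.log_max_inv_mul_le_log_add_log_iSup {K ι : Type*} [Field K] [Finite ι]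
    (v : AbsoluteValue K ℝ) (x : ι → K) {j : ι} (hj : x j ≠ 0) (i : ι) :
    log (max (v ((x j)⁻¹ * x i)) 1) ≤ log (v (x j)⁻¹) + log (⨆ k, v (x k)) := by
  have hle : ∀ k, v (x k) ≤ ⨆ k, v (x k) := le_ciSup (Set.finite_range _).bddAbove
  have hc : 0 < v (x j)⁻¹ := v.pos (inv_ne_zero hj)
  rw [← log_mul hc.ne' ((v.pos hj).trans_le (hle j)).ne']
  refine log_le_log (one_pos.trans_le (le_max_right _ _)) (max_le ?_ ?_)
  · rw [map_mul]
    exact mul_le_mul_of_nonneg_left (hle i) hc.le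
  · calc (1 : ℝ) = v (x j)⁻¹ * v (x j) := by rw [← map_mul, inv_mul_cancel₀ hj, map_one]
      _ ≤ v (x j)⁻¹ * ⨆ k, v (x k) := mul_le_mul_of_nonneg_left (hle j) hc.le

namespace ProperAdelicStructure

variable {K Ω : Type} [Field K] [MeasurableSpace Ω] (S : ProperAdelicStructure K Ω)

/-- The height whose sublevel sets Northcott's property asks to be finite. -/
noncomputable def affineHeight (a : K) : ℝ :=
  ∫ ω, log (max (S.absv ω a) 1) ∂S.ν

theorem affineHeight_pow (a : K) (n : ℕ) : S.affineHeight (a ^ n) = n * S.affineHeight a := by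
  have hpt (ω : Ω) : log (max (S.absv ω (a ^ n)) 1) = n * log (max (S.absv ω a) 1) := by
    have hv := (S.absv ω).nonneg a
    rw [map_pow, max_comm, ← posLog_eq_log_max_one (pow_nonneg hv n), max_comm,
      ← posLog_eq_log_max_one hv, posLog_pow]
  simp only [affineHeight, hpt, integral_const_mul]

/-- For `a = 0` this is the zero function, since `log 0 = 0`. -/
theorem integrable_log_absv (a : K) : Integrable (fun ω => log (S.absv ω a)) S.ν := by
  by_cases ha : a = 0
  · simp [ha]
  · exact S.integrable_log a ha

theorem aemeasurable_absv (a : K) : AEMeasurable (fun ω => S.absv ω a) S.ν := by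
  by_cases ha : a = 0
  · simp [ha]
  · refine (S.integrable_log a ha).aemeasurable.exp.congr (ae_of_all _ fun ω => ?_)
    exact exp_log ((S.absv ω).pos ha)

/-- The supremum is attained at some coordinate, so `|log sup_i |x_i|| ≤ ∑_i |log |x_i||`. -/
theorem integrable_log_iSup_absv {ι : Type*} [Fintype ι] [Nonempty ι] (x : ι → K) :
    Integrable (fun ω => log (⨆ i, S.absv ω (x i))) S.ν := by
  refine Integrable.mono' (integrable_finsetSum Finset.univ fun i _ =>
    (S.integrable_log_absv (x i)).norm) ?_ (ae_of_all _ fun ω => ?_)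
  · exact (measurable_log.comp_aemeasurable
      (AEMeasurable.iSup fun i => S.aemeasurable_absv (x i))).aestronglyMeasurable
  · obtain ⟨k, hk⟩ := exists_eq_ciSup_of_finite (f := fun i => S.absv ω (x i))
    rw [← hk]
    exact Finset.single_le_sum (f := fun i => ‖log (S.absv ω (x i))‖)
      (fun i _ => norm_nonneg _) (Finset.mem_univ k)

theorem affineHeight_inv_mul_le_height {m : ℕ} (x : Fin m → K) {j : Fin m} (hj : x j ≠ 0)
    (i : Fin m) : S.affineHeight ((x j)⁻¹ * x i) ≤ S.height x := by
  have : Nonempty (Fin m) := ⟨j⟩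
  have hc : (x j)⁻¹ ≠ 0 := inv_ne_zero hj
  calc S.affineHeight ((x j)⁻¹ * x i)
      ≤ ∫ ω, (log (S.absv ω (x j)⁻¹) + log (⨆ k, S.absv ω (x k))) ∂S.ν :=
        integral_mono_of_nonneg (ae_of_all _ fun ω => log_nonneg (le_max_right _ _))
          ((S.integrable_log _ hc).add (S.integrable_log_iSup_absv x))
          (ae_of_all _ fun ω => (S.absv ω).log_max_inv_mul_le_log_add_log_iSup x hj i)
    _ = S.height x := by
        rw [integral_add (S.integrable_log _ hc) (S.integrable_log_iSup_absv x),
          S.product_formula _ hc, zero_add, height]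

theorem Northcott.isZeroOrRootOfUnity_of_affineHeight_nonpos {S : ProperAdelicStructure K Ω}
    (hNor : S.Northcott) {b : K} (hb : S.affineHeight b ≤ 0) : IsZeroOrRootOfUnity b :=
  isZeroOrRootOfUnity_of_forall_pow_mem (hNor 0) fun n => show S.affineHeight (b ^ n) ≤ 0 by
    rw [affineHeight_pow]
    exact mul_nonpos_of_nonneg_of_nonpos n.cast_nonneg hb

end ProperAdelicStructure

theorem height_zero_imp_root_of_unity
    {K Ω : Type} [Field K] [MeasurableSpace Ω]
    (S : ProperAdelicStructure K Ω) (hNor : S.Northcott)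
    (n : ℕ) (a : Fin (n + 1) → K) (ha : a ≠ 0)
    (h0 : S.height a = 0) :
    ∃ lam : K, lam ≠ 0 ∧ ∀ i, IsZeroOrRootOfUnity (lam * a i) := by
  obtain ⟨j, hj⟩ := Function.ne_iff.1 ha
  exact ⟨(a j)⁻¹, inv_ne_zero hj, fun i =>
    hNor.isZeroOrRootOfUnity_of_affineHeight_nonpos (h0 ▸ S.affineHeight_inv_mul_le_height a hj i)⟩
end

section
/- Let $K$ be a field with a proper adelic structure $S$ satisfying Northcott's property. Then for any $C \in \mathbb{R}$ and any $n$, the set $\{(x_0 : \cdots : x_n) \in \mathbb{P}^n(K) : h_S(x_0 : \cdots : x_n) \leq C\}$ is finite. -/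
open MeasureTheory

lemma real_log_max {a b : ℝ} (ha : 0 < a) (hb : 0 < b) :
    Real.log (max a b) = max (Real.log a) (Real.log b) := by
  rcases le_total a b with h | h
  · rw [max_eq_right h, max_eq_right (Real.log_le_log ha h)]
  · rw [max_eq_left h, max_eq_left (Real.log_le_log hb h)]

lemma log_sup'_eq {ι : Type*} {T : Finset ι} (hT : T.Nonempty) {f : ι → ℝ}
    (hf : ∀ i ∈ T, 0 < f i) :
    Real.log (T.sup' hT f) = T.sup' hT (fun i => Real.log (f i)) := by
  obtain ⟨i₀, hi₀, hEq⟩ := Finset.exists_mem_eq_sup' hT f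
  refine le_antisymm ?_ ?_
  · rw [hEq]; exact Finset.le_sup' (fun i => Real.log (f i)) hi₀
  · exact Finset.sup'_le _ _ fun i hi =>
      Real.log_le_log (hf i hi) (Finset.le_sup' f hi)

section Aux
open scoped Classical

variable {K Ω : Type} [Field K] [MeasurableSpace Ω] (S : ProperAdelicStructure K Ω)

lemma ciSup_absv_eq {m : ℕ} (x : Fin m → K)
    (hT : (Finset.univ.filter (fun i => x i ≠ 0)).Nonempty) (ω : Ω) :
    (⨆ i, S.absv ω (x i)) =
      (Finset.univ.filter (fun i => x i ≠ 0)).sup' hT (fun i => S.absv ω (x i)) := by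
  obtain ⟨j₀, hj₀⟩ := hT
  have : Nonempty (Fin m) := ⟨j₀⟩
  rw [← Finset.sup'_univ_eq_ciSup]
  apply le_antisymm
  · refine Finset.sup'_le _ _ fun i _ => ?_
    by_cases hi : x i = 0
    · rw [hi, (S.absv ω).map_zero]
      exact le_trans ((S.absv ω).nonneg (x j₀))
        (Finset.le_sup' (fun i => S.absv ω (x i)) hj₀)
    · exact Finset.le_sup' (fun i => S.absv ω (x i))
        (Finset.mem_filter.mpr ⟨Finset.mem_univ i, hi⟩)
  · exact Finset.sup'_le _ _ fun i _ =>
      Finset.le_sup' (fun i => S.absv ω (x i)) (Finset.mem_univ i)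

lemma integrable_log_ciSup {m : ℕ} (x : Fin m → K) {j : Fin m} (hj : x j ≠ 0) :
    Integrable (fun ω => Real.log (⨆ i, S.absv ω (x i))) S.ν := by
  set T := Finset.univ.filter (fun i => x i ≠ 0) with hTdef
  have hT : T.Nonempty := ⟨j, Finset.mem_filter.mpr ⟨Finset.mem_univ j, hj⟩⟩
  have key : (fun ω => Real.log (⨆ i, S.absv ω (x i)))
      = T.sup' hT (fun i => fun ω => Real.log (S.absv ω (x i))) := by
    funext ω
    rw [ciSup_absv_eq S x hT ω, log_sup'_eq hT
      (fun i hi => (S.absv ω).pos (Finset.mem_filter.mp hi).2), Finset.sup'_apply]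
  rw [key]
  refine Finset.sup'_induction (p := fun f => Integrable f S.ν) hT _
    (fun f hf g hg => hf.sup hg) (fun i hi => ?_)
  exact S.integrable_log (x i) (Finset.mem_filter.mp hi).2

lemma integrable_log_max_pair {m : ℕ} (x : Fin m → K) {j : Fin m} (hj : x j ≠ 0) (i : Fin m) :
    Integrable (fun ω => Real.log (max (S.absv ω (x i)) (S.absv ω (x j)))) S.ν := by
  by_cases hi : x i = 0
  · have : (fun ω => Real.log (max (S.absv ω (x i)) (S.absv ω (x j))))
        = fun ω => Real.log (S.absv ω (x j)) := by
      funext ω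
      rw [hi, (S.absv ω).map_zero, max_eq_right ((S.absv ω).nonneg _)]
    rw [this]; exact S.integrable_log _ hj
  · have : (fun ω => Real.log (max (S.absv ω (x i)) (S.absv ω (x j))))
        = fun ω => max (Real.log (S.absv ω (x i))) (Real.log (S.absv ω (x j))) := by
      funext ω
      exact real_log_max ((S.absv ω).pos hi) ((S.absv ω).pos hj)
    rw [this]
    exact (S.integrable_log _ hi).sup (S.integrable_log _ hj)

lemma affine_height_le {m : ℕ} (x : Fin m → K) {j : Fin m} (hj : x j ≠ 0) (i : Fin m) :
    ∫ ω, Real.log (max (S.absv ω (x i / x j)) 1) ∂S.ν ≤ S.height x := by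
  have hpt : ∀ ω, Real.log (max (S.absv ω (x i / x j)) 1)
      = Real.log (max (S.absv ω (x i)) (S.absv ω (x j))) - Real.log (S.absv ω (x j)) := by
    intro ω
    have hjpos : 0 < S.absv ω (x j) := (S.absv ω).pos hj
    have h1 : S.absv ω (x i / x j) = S.absv ω (x i) / S.absv ω (x j) := map_div₀ (S.absv ω) _ _
    have h2 : max (S.absv ω (x i) / S.absv ω (x j)) 1
        = max (S.absv ω (x i)) (S.absv ω (x j)) / S.absv ω (x j) := by
      rw [← div_self (ne_of_gt hjpos), max_div_div_right hjpos.le]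
    rw [h1, h2, Real.log_div (ne_of_gt (lt_of_lt_of_le hjpos (le_max_right _ _)))
      (ne_of_gt hjpos)]
  have hInt1 := integrable_log_max_pair S x hj i
  have hInt2 := S.integrable_log (x j) hj
  calc ∫ ω, Real.log (max (S.absv ω (x i / x j)) 1) ∂S.ν
      = ∫ ω, (Real.log (max (S.absv ω (x i)) (S.absv ω (x j)))
          - Real.log (S.absv ω (x j))) ∂S.ν := by
        exact integral_congr_ae (Filter.Eventually.of_forall hpt)
    _ = (∫ ω, Real.log (max (S.absv ω (x i)) (S.absv ω (x j))) ∂S.ν)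
          - ∫ ω, Real.log (S.absv ω (x j)) ∂S.ν := integral_sub hInt1 hInt2
    _ = ∫ ω, Real.log (max (S.absv ω (x i)) (S.absv ω (x j))) ∂S.ν := by
        rw [S.product_formula (x j) hj, sub_zero]
    _ ≤ S.height x := by
        refine integral_mono hInt1 (integrable_log_ciSup S x hj) fun ω => ?_
        have hjpos : 0 < S.absv ω (x j) := (S.absv ω).pos hj
        have hbdd : BddAbove (Set.range fun k => S.absv ω (x k)) :=
          Set.Finite.bddAbove (Set.finite_range _)
        refine Real.log_le_log (lt_of_lt_of_le hjpos (le_max_right _ _)) ?_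
        exact max_le (le_ciSup hbdd i) (le_ciSup hbdd j)

end Aux

theorem finite_of_bounded_height
    {K Ω : Type} [Field K] [MeasurableSpace Ω]
    (S : ProperAdelicStructure K Ω) (hNor : S.Northcott)
    (n : ℕ) (C : ℝ) :
    {p : Projectivization K (Fin (n + 1) → K) | S.height p.rep ≤ C}.Finite := by
  classical
  have hex : ∀ p : Projectivization K (Fin (n + 1) → K), ∃ i, p.rep i ≠ 0 := by
    intro p
    have h := p.rep_nonzero
    rwa [Function.ne_iff] at h
  set idx : Projectivization K (Fin (n + 1) → K) → Fin (n + 1) :=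
    fun p => (hex p).choose with hidx
  set φ : Projectivization K (Fin (n + 1) → K) → (Fin (n + 1) → K) :=
    fun p i => p.rep i / p.rep (idx p) with hφ
  have hφ0 : ∀ p, φ p ≠ 0 := by
    intro p h
    have := congrFun h (idx p)
    simp only [hφ, Pi.zero_apply, div_eq_zero_iff] at this
    rcases this with h1 | h1 <;> exact (hex p).choose_spec h1
  have hmk : ∀ p, Projectivization.mk K (φ p) (hφ0 p) = p := by
    intro p
    have hc : (p.rep (idx p))⁻¹ ≠ 0 := inv_ne_zero (hex p).choose_spec
    have hsm : φ p = (Units.mk0 _ hc : Kˣ) • p.rep := by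
      funext i
      simp [hφ, div_eq_inv_mul, Units.smul_def, Units.mk0]
    conv_rhs => rw [← p.mk_rep]
    rw [Projectivization.mk_eq_mk_iff]
    exact ⟨Units.mk0 _ hc, hsm.symm⟩
  have hinj : Function.Injective φ := by
    intro p q h
    have : Projectivization.mk K (φ p) (hφ0 p) = Projectivization.mk K (φ q) (hφ0 q) := by
      congr 1
    rw [hmk p, hmk q] at this
    exact this
  have himg : φ '' {p : Projectivization K (Fin (n + 1) → K) | S.height p.rep ≤ C}
      ⊆ Set.pi Set.univ (fun _ : Fin (n + 1) =>
        {a : K | ∫ ω, Real.log (max (S.absv ω a) 1) ∂S.ν ≤ C}) := by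
    rintro f ⟨p, hp, rfl⟩ i -
    exact le_trans (affine_height_le S p.rep (hex p).choose_spec i) hp
  exact Set.Finite.of_finite_image
    ((Set.Finite.pi fun _ => hNor C).subset himg) hinj.injOn
end

section
/- Let $K$ be a field with a proper adelic structure $S$ satisfying Northcott's property, and let $N$ be a positive integer such that the set $F_N(K)$ of $K$-points of the Fermat curve of degree $N$ is finite. Then there exists a positive integer $m_0$ such that for all $m \geq m_0$, the Fermat curve $F_{Nm}$ has Fermat's property over $K$: every solution $(x,y) \in K^2$ of $x^{Nm} + y^{Nm} = 1$ has both coordinates in $\{0\} \cup \mu(K)$. -/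
open MeasureTheory

section Aux

lemma aux_log_max_one (a : ℝ) (ha : 0 ≤ a) : Real.log (max a 1) = max (Real.log a) 0 := by
  rcases le_or_gt a 1 with h | h
  · rw [max_eq_right h, Real.log_one, max_eq_right (Real.log_nonpos ha h)]
  · rw [max_eq_left h.le, max_eq_left (Real.log_nonneg h.le)]

lemma aux_max_pow (a : ℝ) (ha : 0 ≤ a) (k : ℕ) : max (a ^ k) 1 = (max a 1) ^ k := by
  rcases le_total a 1 with h | h
  · rw [max_eq_right h, max_eq_right (pow_le_one₀ ha h), one_pow]
  · rw [max_eq_left h, max_eq_left (one_le_pow₀ h)]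

lemma aux_log_max_max (c d : ℝ) (hc : 1 ≤ c) (hd : 1 ≤ d) :
    Real.log (max c d) = max (Real.log c) (Real.log d) := by
  rcases le_total c d with h | h
  · rw [max_eq_right h, max_eq_right (Real.log_le_log (lt_of_lt_of_le one_pos hc) h)]
  · rw [max_eq_left h, max_eq_left (Real.log_le_log (lt_of_lt_of_le one_pos hd) h)]

lemma aux_fin3_sup (f : Fin 3 → ℝ) : (⨆ i, f i) = max (f 0) (max (f 1) (f 2)) := by
  apply le_antisymm
  · apply ciSup_le
    intro i
    fin_cases i
    · exact le_max_left _ _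
    · exact le_trans (le_max_left _ _) (le_max_right _ _)
    · exact le_trans (le_max_right _ _) (le_max_right _ _)
  · have hb : BddAbove (Set.range f) := (Set.finite_range f).bddAbove
    exact max_le (le_ciSup hb 0) (max_le (le_ciSup hb 1) (le_ciSup hb 2))

variable {K Ω : Type} [Field K] [MeasurableSpace Ω] (S : ProperAdelicStructure K Ω)

/-- The standard (logarithmic Weil) height of an element of `K`. -/
noncomputable def hOne (x : K) : ℝ := ∫ ω, Real.log (max (S.absv ω x) 1) ∂S.ν

lemma hOne_integrable (x : K) :
    Integrable (fun ω => Real.log (max (S.absv ω x) 1)) S.ν := by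
  by_cases hx : x = 0
  · have : (fun ω => Real.log (max (S.absv ω x) 1)) = fun _ => 0 := by
      funext ω; simp [hx]
    rw [this]
    exact integrable_zero _ _ _
  · have h1 := (S.integrable_log x hx).sup (integrable_zero _ _ _)
    have : (fun ω => Real.log (max (S.absv ω x) 1)) =
        (fun ω => Real.log (S.absv ω x)) ⊔ (fun _ => (0 : ℝ)) := by
      funext ω
      simpa using aux_log_max_one (S.absv ω x) ((S.absv ω).nonneg x)
    rw [this]
    exact h1

lemma hOne_nonneg (x : K) : 0 ≤ hOne S x := by
  apply integral_nonneg
  intro ω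
  exact Real.log_nonneg (le_max_right _ _)

lemma hOne_pow (x : K) (k : ℕ) : hOne S (x ^ k) = k * hOne S x := by
  unfold hOne
  rw [← integral_const_mul]
  congr 1
  funext ω
  rw [map_pow, aux_max_pow _ ((S.absv ω).nonneg x), Real.log_pow]

lemma hOne_kronecker (hNor : S.Northcott) (x : K) (hx : hOne S x ≤ 0) :
    IsZeroOrRootOfUnity x := by
  have hfin : {a : K | hOne S a ≤ 0}.Finite := hNor 0
  have hmem : ∀ k : ℕ, x ^ k ∈ {a : K | hOne S a ≤ 0} := by
    intro k
    have := hOne_pow S x k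
    have hx0 : hOne S x = 0 := le_antisymm hx (hOne_nonneg S x)
    simp [Set.mem_setOf_eq, this, hx0]
  have : ¬ Function.Injective (fun k : ℕ => (⟨x ^ k, hmem k⟩ : {a : K | hOne S a ≤ 0})) := by
    have := hfin.to_subtype
    exact fun hinj => (Finite.of_injective _ hinj).false
  rw [Function.not_injective_iff] at this
  obtain ⟨i, j, hij, hne⟩ := this
  have hij' : x ^ i = x ^ j := by simpa using hij
  by_cases hx0 : x = 0
  · exact Or.inl hx0
  · right
    rcases Nat.lt_or_ge i j with h | h
    · refine ⟨j - i, Nat.sub_pos_of_lt h, ?_⟩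
      have : x ^ i * x ^ (j - i) = x ^ i * 1 := by
        rw [← pow_add, Nat.add_sub_cancel' h.le, mul_one, hij']
      exact mul_left_cancel₀ (pow_ne_zero i hx0) this
    · have h' : j < i := lt_of_le_of_ne h (fun e => hne e.symm)
      refine ⟨i - j, Nat.sub_pos_of_lt h', ?_⟩
      have : x ^ j * x ^ (i - j) = x ^ j * 1 := by
        rw [← pow_add, Nat.add_sub_cancel' h'.le, mul_one, hij']
      exact mul_left_cancel₀ (pow_ne_zero j hx0) this

lemma hOne_le_height_rep (v : Fin 3 → K) (hv : v ≠ 0) (hv2 : v 2 = 1) :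
    hOne S (v 0) ≤ S.height (Projectivization.mk K v hv).rep ∧
      hOne S (v 1) ≤ S.height (Projectivization.mk K v hv).rep := by
  obtain ⟨a, ha⟩ := Projectivization.exists_smul_eq_mk_rep K v hv
  have ha0 : (a : K) ≠ 0 := a.ne_zero
  set g0 : Ω → ℝ := fun ω => Real.log (max (S.absv ω (v 0)) 1) with hg0
  set g1 : Ω → ℝ := fun ω => Real.log (max (S.absv ω (v 1)) 1) with hg1
  have key : ∀ ω, Real.log (⨆ i, S.absv ω ((Projectivization.mk K v hv).rep i)) =
      Real.log (S.absv ω (a : K)) + max (g0 ω) (g1 ω) := by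
    intro ω
    rw [← ha]
    have habs : ∀ i : Fin 3, S.absv ω ((a • v) i) = S.absv ω (a : K) * S.absv ω (v i) := by
      intro i
      rw [Pi.smul_apply, Units.smul_def, smul_eq_mul, map_mul]
    have hsup : (⨆ i, S.absv ω ((a • v) i)) =
        S.absv ω (a : K) * max (S.absv ω (v 0)) (max (S.absv ω (v 1)) 1) := by
      rw [aux_fin3_sup (fun i => S.absv ω ((a • v) i))]
      simp only [habs, hv2, map_one, mul_one]
      rw [mul_max_of_nonneg _ _ ((S.absv ω).nonneg _),
        mul_max_of_nonneg _ _ ((S.absv ω).nonneg _), mul_one]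
    rw [hsup]
    have hApos : 0 < S.absv ω (a : K) := (S.absv ω).pos ha0
    have hM1 : (1 : ℝ) ≤ max (S.absv ω (v 0)) (max (S.absv ω (v 1)) 1) :=
      le_trans (le_max_right _ _) (le_max_right _ _)
    rw [Real.log_mul (ne_of_gt hApos) (by linarith)]
    congr 1
    have hre : max (S.absv ω (v 0)) (max (S.absv ω (v 1)) 1) =
        max (max (S.absv ω (v 0)) 1) (max (S.absv ω (v 1)) 1) := by
      rw [max_assoc]
      congr 1
      rw [max_comm (1 : ℝ) _, max_assoc, max_self]
    rw [hre, aux_log_max_max _ _ (le_max_right _ _) (le_max_right _ _)]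
  have hint0 : Integrable g0 S.ν := hOne_integrable S (v 0)
  have hint1 : Integrable g1 S.ν := hOne_integrable S (v 1)
  have hintmax : Integrable (fun ω => max (g0 ω) (g1 ω)) S.ν := hint0.sup hint1
  have hinta : Integrable (fun ω => Real.log (S.absv ω (a : K))) S.ν :=
    S.integrable_log _ ha0
  have hheight : S.height (Projectivization.mk K v hv).rep =
      ∫ ω, max (g0 ω) (g1 ω) ∂S.ν := by
    unfold ProperAdelicStructure.height
    calc (∫ ω, Real.log (⨆ i, S.absv ω ((Projectivization.mk K v hv).rep i)) ∂S.ν)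
        = ∫ ω, (Real.log (S.absv ω (a : K)) + max (g0 ω) (g1 ω)) ∂S.ν := by
          congr 1; funext ω; exact key ω
      _ = (∫ ω, Real.log (S.absv ω (a : K)) ∂S.ν) + ∫ ω, max (g0 ω) (g1 ω) ∂S.ν :=
          integral_add hinta hintmax
      _ = ∫ ω, max (g0 ω) (g1 ω) ∂S.ν := by
          rw [S.product_formula _ ha0, zero_add]
  rw [hheight]
  constructor
  · exact integral_mono hint0 hintmax (fun ω => le_max_left _ _)
  · exact integral_mono hint1 hintmax (fun ω => le_max_right _ _)

end Aux

theorem fermat_property_of_multiples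
    {K Ω : Type} [Field K] [MeasurableSpace Ω]
    (S : ProperAdelicStructure K Ω) (hNor : S.Northcott)
    (N : ℕ) (hN : 0 < N)
    (hfin : {p : Projectivization K (Fin 3 → K) |
        p.rep 0 ^ N + p.rep 1 ^ N = p.rep 2 ^ N}.Finite) :
    ∃ m₀ : ℕ, 0 < m₀ ∧ ∀ m : ℕ, m₀ ≤ m →
      ∀ x y : K, x ^ (N * m) + y ^ (N * m) = 1 →
        IsZeroOrRootOfUnity x ∧ IsZeroOrRootOfUnity y := by
  classical
  set F := {p : Projectivization K (Fin 3 → K) |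
      p.rep 0 ^ N + p.rep 1 ^ N = p.rep 2 ^ N} with hF
  -- a bound on the heights of representatives of points of the Fermat set
  obtain ⟨C₀, hC₀⟩ : BddAbove ((fun p : Projectivization K (Fin 3 → K) => S.height p.rep) '' F) :=
    (hfin.image _).bddAbove
  set C : ℝ := max C₀ 0 with hC
  have hCnonneg : 0 ≤ C := le_max_right _ _
  have hbound : ∀ p ∈ F, S.height p.rep ≤ C := fun p hp =>
    le_trans (hC₀ (Set.mem_image_of_mem _ hp)) (le_max_left _ _)
  -- key: a gap below which bounded-height elements have height zero
  have hkey : ∃ a : ℝ, 0 < a ∧ ∀ x : K, hOne S x ≤ C → hOne S x < a → hOne S x ≤ 0 := by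
    have hTfin : {x : K | hOne S x ≤ C}.Finite := hNor C
    set P : Set ℝ := ((fun x => hOne S x) '' {x : K | hOne S x ≤ C}) ∩ Set.Ioi 0 with hP
    have hPfin : P.Finite := (hTfin.image _).inter_of_left _
    by_cases hPne : P.Nonempty
    · obtain ⟨a, haP, hamin⟩ := Set.exists_min_image P id hPfin hPne
      refine ⟨a, haP.2, ?_⟩
      intro x hxC hxa
      by_contra hpos
      push_neg at hpos
      have : hOne S x ∈ P := ⟨Set.mem_image_of_mem _ hxC, hpos⟩
      exact absurd (hamin _ this) (not_le.mpr hxa)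
    · refine ⟨1, one_pos, ?_⟩
      intro x hxC _
      by_contra hpos
      push_neg at hpos
      exact hPne ⟨hOne S x, Set.mem_image_of_mem _ hxC, hpos⟩
  obtain ⟨a, hapos, hazero⟩ := hkey
  obtain ⟨n, hn⟩ := exists_nat_gt (C / a)
  refine ⟨max n 1, lt_of_lt_of_le one_pos (le_max_right _ _), ?_⟩
  intro m hm x y heq
  have hm1 : 1 ≤ m := le_trans (le_max_right _ _) hm
  have hmC : C < (max n 1 : ℕ) * a := by
    have h1 : C / a < (max n 1 : ℕ) := lt_of_lt_of_le hn (by exact_mod_cast le_max_left n 1)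
    calc C = (C / a) * a := by field_simp
      _ < (max n 1 : ℕ) * a := by
        apply mul_lt_mul_of_pos_right h1 hapos
  -- the projective point associated to a solution
  have hcoord : hOne S (x ^ m) ≤ C ∧ hOne S (y ^ m) ≤ C := by
    set v : Fin 3 → K := ![x ^ m, y ^ m, 1] with hvdef
    have hv2 : v 2 = 1 := rfl
    have hv : v ≠ 0 := by
      intro h
      have := congrFun h 2
      rw [hv2] at this
      exact one_ne_zero this
    obtain ⟨b, hb⟩ := Projectivization.exists_smul_eq_mk_rep K v hv
    have hmemF : Projectivization.mk K v hv ∈ F := by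
      have hrep : ∀ i : Fin 3, (Projectivization.mk K v hv).rep i = (b : K) * v i := by
        intro i
        rw [← hb, Pi.smul_apply, Units.smul_def, smul_eq_mul]
      show (Projectivization.mk K v hv).rep 0 ^ N + (Projectivization.mk K v hv).rep 1 ^ N =
        (Projectivization.mk K v hv).rep 2 ^ N
      rw [hrep 0, hrep 1, hrep 2, hv2]
      have hv0 : v 0 = x ^ m := rfl
      have hv1 : v 1 = y ^ m := rfl
      rw [hv0, hv1, mul_pow, mul_pow, mul_pow, ← pow_mul, ← pow_mul, mul_comm m N, ← mul_add, heq]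
      ring
    have hle := hOne_le_height_rep S v hv hv2
    have hhb : S.height (Projectivization.mk K v hv).rep ≤ C := hbound _ hmemF
    exact ⟨le_trans hle.1 hhb, le_trans hle.2 hhb⟩
  -- conclude for a single coordinate
  have final : ∀ z : K, hOne S (z ^ m) ≤ C → IsZeroOrRootOfUnity z := by
    intro z hz
    rw [hOne_pow] at hz
    have hznn : 0 ≤ hOne S z := hOne_nonneg S z
    have hzC : hOne S z ≤ C := by
      calc hOne S z = 1 * hOne S z := (one_mul _).symm
        _ ≤ (m : ℝ) * hOne S z := by
          apply mul_le_mul_of_nonneg_right _ hznn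
          exact_mod_cast hm1
        _ ≤ C := hz
    have hza : hOne S z < a := by
      by_contra hge
      push_neg at hge
      have : ((max n 1 : ℕ) : ℝ) * a ≤ (m : ℝ) * hOne S z := by
        apply mul_le_mul _ hge hapos.le (Nat.cast_nonneg _)
        exact_mod_cast hm
      linarith [hmC, hz]
    exact hOne_kronecker S hNor z (hazero z hzC hza)
  exact ⟨final x hcoord.1, final y hcoord.2⟩
end
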